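/- Consider the shallow Transformer f(X;φ) = m^{-1/2} ∑_{i=1}^m c_i h(X;θ_i) with h(X;θ) = σ(U^⊤ a(X;W)), where |σ| ≤ σ_0, |σ'| ≤ σ_1, |σ''| ≤ σ_2. Let the initialization φ^{(0)} satisfy |c_i^{(0)}| = 1 for all i, f(X;φ^{(0)}) = 0 for all X, and max_{i∈[m]} ‖U_i^{(0)}‖_2 + ρ_u/√m ≤ B_U. Let f_lin(X;φ) = ⟨∇_φ f(X;φ^{(0)}), φ − φ^{(0)}⟩ denote the linearized model. Then for every φ in the set Ω_ρ = {φ : |c_i − c_i^{(0)}| ≤ ρ_c/√m, ‖U_i − U_i^{(0)}‖_2 ≤ ρ_u/√m, ‖W_i − W_i^{(0)}‖_F ≤ ρ_w/√m for all i} and every input X ∈ 𝒳, |f(X;φ) − f_lin(X;φ)| ≤ m^{-1/2} ( L_1 ρ_c √(ρ_u² + ρ_w²) + L_2 (ρ_u² + ρ_w²) ), where L_1 = σ_1 √(1 + B_U²) and L_2 = σ_2 (1 + B_U²) + 8 σ_1 √(1 + B_U²). -/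

import Mathlib

open scoped BigOperators

noncomputable section

/-- The softmax map `(σ_s(z))_t = exp(z_t) / ∑_s exp(z_s)`. -/
def softmax {T : ℕ} (z : Fin T → ℝ) : Fin T → ℝ :=
  fun t => Real.exp (z t) / ∑ s, Real.exp (z s)

/-- Euclidean (ℓ²) norm of a finitely indexed real vector. -/
def l2 {ι : Type*} [Fintype ι] (v : ι → ℝ) : ℝ := Real.sqrt (∑ i, v i ^ 2)

/-- ℓ¹ norm. -/
def l1 {ι : Type*} [Fintype ι] (v : ι → ℝ) : ℝ := ∑ i, |v i|

/-- ℓ^∞ norm. -/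
def linf {ι : Type*} [Fintype ι] (v : ι → ℝ) : ℝ := ⨆ i, |v i|

/-- Frobenius norm of a matrix given as a function. -/
def frob {ι κ : Type*} [Fintype ι] [Fintype κ] (A : ι → κ → ℝ) : ℝ :=
  Real.sqrt (∑ i, ∑ j, A i j ^ 2)

/-- Euclidean inner product. -/
def dot {ι : Type*} [Fintype ι] (u v : ι → ℝ) : ℝ := ∑ i, u i * v i

/-- Frobenius inner product. -/
def frobDot {ι κ : Type*} [Fintype ι] [Fintype κ] (A B : ι → κ → ℝ) : ℝ :=
  ∑ i, ∑ j, A i j * B i j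

/-- Jacobian matrix of softmax: `J_s(z) = diag(σ_s(z)) − σ_s(z) σ_s(z)ᵀ`. -/
def softmaxJac {T : ℕ} (z : Fin T → ℝ) : Fin T → Fin T → ℝ :=
  fun s t => (if s = t then softmax z s else 0) - softmax z s * softmax z t

/-- Attention scores `X ᵀ W q ∈ ℝ^T`. -/
def score {d T : ℕ} (X : Fin d → Fin T → ℝ) (W : Fin d → Fin d → ℝ) (q : Fin d → ℝ) :
    Fin T → ℝ :=
  fun t => ∑ i, X i t * (∑ j, W i j * q j)

/-- Attention output `a(X;W) = X σ_s(Xᵀ W q)`. -/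
def attn {d T : ℕ} (X : Fin d → Fin T → ℝ) (W : Fin d → Fin d → ℝ) (q : Fin d → ℝ) :
    Fin d → ℝ :=
  fun i => ∑ t, X i t * softmax (score X W q) t

/-- The matrix `M(X;W) = X J_s(Xᵀ W q) Xᵀ`. -/
def Mmat {d T : ℕ} (X : Fin d → Fin T → ℝ) (W : Fin d → Fin d → ℝ) (q : Fin d → ℝ) :
    Fin d → Fin d → ℝ :=
  fun i j => ∑ s, ∑ t, X i s * softmaxJac (score X W q) s t * X j t

/-- Single head output `h(X;θ) = σ(Uᵀ a(X;W))`. -/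
def hHead {d T : ℕ} (σf : ℝ → ℝ) (X : Fin d → Fin T → ℝ) (q : Fin d → ℝ)
    (U : Fin d → ℝ) (W : Fin d → Fin d → ℝ) : ℝ :=
  σf (dot U (attn X W q))

/-- Shallow multi-head Transformer `f(X;φ) = m^{-1/2} ∑_i c_i σ(U_iᵀ a(X;W_i))`. -/
def fModel {m d T : ℕ} (σf : ℝ → ℝ) (X : Fin d → Fin T → ℝ) (q : Fin d → ℝ)
    (c : Fin m → ℝ) (U : Fin m → Fin d → ℝ) (W : Fin m → Fin d → Fin d → ℝ) : ℝ :=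
  (Real.sqrt m)⁻¹ * ∑ i, c i * hHead σf X q (U i) (W i)

/-- The linearized model
`f_lin(X;φ) = ⟨∇_φ f(X;φ⁽⁰⁾), φ − φ⁽⁰⁾⟩`, written out through the gradient formulas
of the shallow Transformer at the initialization `(c0, U0, W0)`. -/
def flin {m d T : ℕ} (σf : ℝ → ℝ) (X : Fin d → Fin T → ℝ) (q : Fin d → ℝ)
    (c0 : Fin m → ℝ) (U0 : Fin m → Fin d → ℝ) (W0 : Fin m → Fin d → Fin d → ℝ)
    (c : Fin m → ℝ) (U : Fin m → Fin d → ℝ) (W : Fin m → Fin d → Fin d → ℝ) : ℝ :=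
  (Real.sqrt m)⁻¹ * ∑ i,
    (hHead σf X q (U0 i) (W0 i) * (c i - c0 i)
     + c0 i * deriv σf (dot (U0 i) (attn X (W0 i) q)) *
         dot (attn X (W0 i) q) (fun k => U i k - U0 i k)
     + c0 i * deriv σf (dot (U0 i) (attn X (W0 i) q)) *
         frobDot (fun k l => (∑ j, Mmat X (W0 i) q k j * U0 i j) * q l)
           (fun k l => W i k l - W0 i k l))

section Helpers
variable {ι κ : Type*} [Fintype ι] [Fintype κ]


lemma l2_nonneg (v : ι → ℝ) : 0 ≤ l2 v := Real.sqrt_nonneg _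
lemma frob_nonneg (A : ι → κ → ℝ) : 0 ≤ frob A := Real.sqrt_nonneg _

lemma abs_dot_le (u v : ι → ℝ) : |dot u v| ≤ l2 u * l2 v := by
  have h := Finset.sum_mul_sq_le_sq_mul_sq Finset.univ u v
  calc |dot u v| = Real.sqrt ((∑ i, u i * v i) ^ 2) := by
        rw [Real.sqrt_sq_eq_abs]; rfl
    _ ≤ Real.sqrt ((∑ i, u i ^ 2) * ∑ i, v i ^ 2) := Real.sqrt_le_sqrt h
    _ = l2 u * l2 v := Real.sqrt_mul (by positivity) _

lemma sq_l2 (v : ι → ℝ) : l2 v ^ 2 = ∑ i, v i ^ 2 :=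
  Real.sq_sqrt (by positivity)

lemma l2_le_of_sq_le {v : ι → ℝ} {c : ℝ} (hc : 0 ≤ c) (h : ∑ i, v i ^ 2 ≤ c ^ 2) :
    l2 v ≤ c := by
  rw [l2, show c = Real.sqrt (c ^ 2) by rw [Real.sqrt_sq hc]]
  exact Real.sqrt_le_sqrt h

lemma l2_eq_norm (v : ι → ℝ) : l2 v = ‖(WithLp.equiv 2 (ι → ℝ)).symm v‖ := by
  rw [EuclideanSpace.norm_eq]; simp [l2, sq_abs]

lemma l2_sum_le {τ : Type*} (s : Finset τ) (f : τ → ι → ℝ) :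
    l2 (fun i => ∑ t ∈ s, f t i) ≤ ∑ t ∈ s, l2 (f t) := by
  have key : (WithLp.equiv 2 (ι → ℝ)).symm (fun i => ∑ t ∈ s, f t i)
      = ∑ t ∈ s, (WithLp.equiv 2 (ι → ℝ)).symm (f t) := by
    ext i
    simp
  rw [l2_eq_norm, key]
  refine (norm_sum_le _ _).trans ?_
  exact Finset.sum_le_sum fun t _ => by rw [l2_eq_norm]

lemma l2_smul (c : ℝ) (v : ι → ℝ) : l2 (fun i => c * v i) = |c| * l2 v := by
  simp only [l2, mul_pow, ← Finset.mul_sum]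
  rw [Real.sqrt_mul (by positivity), Real.sqrt_sq_eq_abs]

-- ‖A q‖ ≤ frob A * l2 q
lemma l2_matvec_le (A : ι → κ → ℝ) (q : κ → ℝ) :
    l2 (fun i => ∑ j, A i j * q j) ≤ frob A * l2 q := by
  refine l2_le_of_sq_le (mul_nonneg (frob_nonneg _) (l2_nonneg _)) ?_
  have : ∀ i, (∑ j, A i j * q j) ^ 2 ≤ (∑ j, A i j ^ 2) * ∑ j, q j ^ 2 :=
    fun i => Finset.sum_mul_sq_le_sq_mul_sq _ _ _
  calc ∑ i, (∑ j, A i j * q j) ^ 2 ≤ ∑ i, (∑ j, A i j ^ 2) * ∑ j, q j ^ 2 :=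
        Finset.sum_le_sum fun i _ => this i
    _ = (∑ i, ∑ j, A i j ^ 2) * ∑ j, q j ^ 2 := by rw [Finset.sum_mul]
    _ = (frob A * l2 q) ^ 2 := by
        rw [mul_pow, frob, l2, Real.sq_sqrt (by positivity), Real.sq_sqrt (by positivity)]

lemma l2_add_le (u v : ι → ℝ) : l2 (fun k => u k + v k) ≤ l2 u + l2 v := by
  have key : (WithLp.equiv 2 (ι → ℝ)).symm (fun k => u k + v k)
      = (WithLp.equiv 2 (ι → ℝ)).symm u + (WithLp.equiv 2 (ι → ℝ)).symm v := rfl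
  rw [l2_eq_norm, key, l2_eq_norm, l2_eq_norm]
  exact norm_add_le _ _

end Helpers

namespace TF
variable {d T : ℕ}

def Ee (z0 ζ : Fin T → ℝ) (s : ℝ) (t : Fin T) : ℝ := Real.exp (z0 t + s * ζ t)
def Ss (z0 ζ : Fin T → ℝ) (s : ℝ) : ℝ := ∑ t, Ee z0 ζ s t
def pp (z0 ζ : Fin T → ℝ) (s : ℝ) (t : Fin T) : ℝ := Ee z0 ζ s t / Ss z0 ζ s
def ww (z0 ζ : Fin T → ℝ) (s : ℝ) : ℝ := ∑ t, pp z0 ζ s t * ζ t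
def q1 (z0 ζ : Fin T → ℝ) (s : ℝ) (t : Fin T) : ℝ := pp z0 ζ s t * (ζ t - ww z0 ζ s)
def w1 (z0 ζ : Fin T → ℝ) (s : ℝ) : ℝ := ∑ t, q1 z0 ζ s t * ζ t
def q2 (z0 ζ : Fin T → ℝ) (s : ℝ) (t : Fin T) : ℝ :=
  q1 z0 ζ s t * (ζ t - ww z0 ζ s) - pp z0 ζ s t * w1 z0 ζ s

lemma Ss_pos (z0 ζ : Fin T → ℝ) (t : Fin T) (s : ℝ) : 0 < Ss z0 ζ s :=
  Finset.sum_pos (fun u _ => Real.exp_pos _) ⟨t, Finset.mem_univ t⟩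

lemma pp_pos (z0 ζ : Fin T → ℝ) (s : ℝ) (t : Fin T) : 0 < pp z0 ζ s t :=
  div_pos (Real.exp_pos _) (Ss_pos z0 ζ t s)

lemma pp_sum_le (z0 ζ : Fin T → ℝ) (s : ℝ) : ∑ t, pp z0 ζ s t ≤ 1 := by
  rcases isEmpty_or_nonempty (Fin T) with h | h
  · simp
  · obtain ⟨t⟩ := h
    have hS := Ss_pos z0 ζ t s
    unfold pp
    rw [← Finset.sum_div, div_le_one hS]
    exact le_refl _

lemma hasDerivAt_Ee (z0 ζ : Fin T → ℝ) (u : Fin T) (s : ℝ) :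
    HasDerivAt (fun s => Ee z0 ζ s u) (ζ u * Ee z0 ζ s u) s := by
  have h : HasDerivAt (fun s : ℝ => z0 u + s * ζ u) (ζ u) s := by
    simpa using (hasDerivAt_mul_const (ζ u)).const_add (z0 u)
  simpa [Ee, mul_comm] using h.exp

lemma hasDerivAt_Ss (z0 ζ : Fin T → ℝ) (s : ℝ) :
    HasDerivAt (fun s => Ss z0 ζ s) (∑ u, ζ u * Ee z0 ζ s u) s :=
  HasDerivAt.fun_sum fun u _ => hasDerivAt_Ee z0 ζ u s

lemma ww_eq (z0 ζ : Fin T → ℝ) (s : ℝ) :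
    ww z0 ζ s = (∑ u, ζ u * Ee z0 ζ s u) / Ss z0 ζ s := by
  unfold ww pp
  rw [Finset.sum_div]
  exact Finset.sum_congr rfl fun u _ => by rw [div_mul_eq_mul_div, mul_comm (Ee z0 ζ s u)]

lemma hasDerivAt_pp (z0 ζ : Fin T → ℝ) (t : Fin T) (s : ℝ) :
    HasDerivAt (fun s => pp z0 ζ s t) (q1 z0 ζ s t) s := by
  have hS := Ss_pos z0 ζ t s
  have h := (hasDerivAt_Ee z0 ζ t s).fun_div (hasDerivAt_Ss z0 ζ s) (ne_of_gt hS)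
  refine h.congr_deriv ?_
  rw [q1, pp, ww_eq]
  field_simp

lemma hasDerivAt_ww (z0 ζ : Fin T → ℝ) (s : ℝ) :
    HasDerivAt (fun s => ww z0 ζ s) (w1 z0 ζ s) s := by
  unfold ww w1
  exact HasDerivAt.fun_sum fun t _ => (hasDerivAt_pp z0 ζ t s).mul_const (ζ t)

lemma hasDerivAt_q1 (z0 ζ : Fin T → ℝ) (t : Fin T) (s : ℝ) :
    HasDerivAt (fun s => q1 z0 ζ s t) (q2 z0 ζ s t) s := by
  have h := (hasDerivAt_pp z0 ζ t s).fun_mul ((hasDerivAt_ww z0 ζ s).const_sub (ζ t))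
  refine h.congr_deriv ?_
  rw [q2, q1]
  ring



def AA (X : Fin d → Fin T → ℝ) (z0 ζ : Fin T → ℝ) (s : ℝ) (k : Fin d) : ℝ :=
  ∑ t, X k t * pp z0 ζ s t
def BB (X : Fin d → Fin T → ℝ) (z0 ζ : Fin T → ℝ) (s : ℝ) (k : Fin d) : ℝ :=
  ∑ t, X k t * q1 z0 ζ s t
def CC (X : Fin d → Fin T → ℝ) (z0 ζ : Fin T → ℝ) (s : ℝ) (k : Fin d) : ℝ :=
  ∑ t, X k t * q2 z0 ζ s t
def Uu (U0 ΔU : Fin d → ℝ) (s : ℝ) (k : Fin d) : ℝ := U0 k + s * ΔU k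
def gg (X : Fin d → Fin T → ℝ) (z0 ζ : Fin T → ℝ) (U0 ΔU : Fin d → ℝ) (s : ℝ) : ℝ :=
  dot (Uu U0 ΔU s) (AA X z0 ζ s)
def gg1 (X : Fin d → Fin T → ℝ) (z0 ζ : Fin T → ℝ) (U0 ΔU : Fin d → ℝ) (s : ℝ) : ℝ :=
  dot ΔU (AA X z0 ζ s) + dot (Uu U0 ΔU s) (BB X z0 ζ s)
def gg2 (X : Fin d → Fin T → ℝ) (z0 ζ : Fin T → ℝ) (U0 ΔU : Fin d → ℝ) (s : ℝ) : ℝ :=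
  2 * dot ΔU (BB X z0 ζ s) + dot (Uu U0 ΔU s) (CC X z0 ζ s)

variable (X : Fin d → Fin T → ℝ) (z0 ζ : Fin T → ℝ) (U0 ΔU : Fin d → ℝ)

lemma hasDerivAt_AA (k : Fin d) (s : ℝ) :
    HasDerivAt (fun s => AA X z0 ζ s k) (BB X z0 ζ s k) s :=
  HasDerivAt.fun_sum fun t _ => (hasDerivAt_pp z0 ζ t s).const_mul (X k t)

lemma hasDerivAt_BB (k : Fin d) (s : ℝ) :
    HasDerivAt (fun s => BB X z0 ζ s k) (CC X z0 ζ s k) s :=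
  HasDerivAt.fun_sum fun t _ => (hasDerivAt_q1 z0 ζ t s).const_mul (X k t)

lemma hasDerivAt_gg (s : ℝ) :
    HasDerivAt (fun s => gg X z0 ζ U0 ΔU s) (gg1 X z0 ζ U0 ΔU s) s := by
  have h : HasDerivAt (fun s => gg X z0 ζ U0 ΔU s)
      (∑ k, (ΔU k * AA X z0 ζ s k + Uu U0 ΔU s k * BB X z0 ζ s k)) s := by
    unfold gg dot
    apply HasDerivAt.fun_sum
    intro k _
    have hu : HasDerivAt (fun s => Uu U0 ΔU s k) (ΔU k) s := by
      exact (hasDerivAt_mul_const (ΔU k)).const_add (U0 k)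
    exact hu.mul (hasDerivAt_AA X z0 ζ k s)
  convert h using 1
  simp only [gg1, dot, ← Finset.sum_add_distrib]

lemma hasDerivAt_gg1 (s : ℝ) :
    HasDerivAt (fun s => gg1 X z0 ζ U0 ΔU s) (gg2 X z0 ζ U0 ΔU s) s := by
  have h1 : HasDerivAt (fun s => dot ΔU (AA X z0 ζ s)) (dot ΔU (BB X z0 ζ s)) s :=
    HasDerivAt.fun_sum fun k _ => (hasDerivAt_AA X z0 ζ k s).const_mul (ΔU k)
  have h2 : HasDerivAt (fun s => dot (Uu U0 ΔU s) (BB X z0 ζ s))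
      (∑ k, (ΔU k * BB X z0 ζ s k + Uu U0 ΔU s k * CC X z0 ζ s k)) s := by
    unfold dot
    apply HasDerivAt.fun_sum
    intro k _
    have hu : HasDerivAt (fun s => Uu U0 ΔU s k) (ΔU k) s := by
      exact (hasDerivAt_mul_const (ΔU k)).const_add (U0 k)
    exact hu.mul (hasDerivAt_BB X z0 ζ k s)
  refine (h1.fun_add h2).congr_deriv ?_
  simp only [gg2, dot, Finset.mul_sum, ← Finset.sum_add_distrib]
  exact Finset.sum_congr rfl fun k _ => by ring



variable {b : ℝ}

lemma abs_ww_le (hζ : ∀ t, |ζ t| ≤ b) (hb : 0 ≤ b) (s : ℝ) : |ww z0 ζ s| ≤ b := by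
  calc |ww z0 ζ s| ≤ ∑ t, |pp z0 ζ s t * ζ t| := Finset.abs_sum_le_sum_abs _ _
    _ ≤ ∑ t, pp z0 ζ s t * b := by
        refine Finset.sum_le_sum fun t _ => ?_
        rw [abs_mul, abs_of_pos (pp_pos z0 ζ s t)]
        exact mul_le_mul_of_nonneg_left (hζ t) (le_of_lt (pp_pos z0 ζ s t))
    _ = (∑ t, pp z0 ζ s t) * b := by rw [Finset.sum_mul]
    _ ≤ 1 * b := mul_le_mul_of_nonneg_right (pp_sum_le z0 ζ s) hb
    _ = b := one_mul b

lemma sum_q1_abs_le (hζ : ∀ t, |ζ t| ≤ b) (hb : 0 ≤ b) (s : ℝ) :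
    ∑ t, |q1 z0 ζ s t| ≤ b := by
  have hpp : ∀ t, (0:ℝ) ≤ pp z0 ζ s t := fun t => le_of_lt (pp_pos z0 ζ s t)
  have key : ∑ t, pp z0 ζ s t * (ζ t - ww z0 ζ s) ^ 2 ≤ b ^ 2 := by
    have expand : ∑ t, pp z0 ζ s t * (ζ t - ww z0 ζ s) ^ 2
        = (∑ t, pp z0 ζ s t * ζ t ^ 2) - 2 * ww z0 ζ s * (∑ t, pp z0 ζ s t * ζ t)
          + ww z0 ζ s ^ 2 * ∑ t, pp z0 ζ s t := by
      simp only [Finset.mul_sum, Finset.sum_mul, ← Finset.sum_sub_distrib,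
        ← Finset.sum_add_distrib]
      exact Finset.sum_congr rfl fun t _ => by ring
    have h1 : ∑ t, pp z0 ζ s t * ζ t ^ 2 ≤ b ^ 2 * ∑ t, pp z0 ζ s t := by
      rw [Finset.mul_sum]
      refine Finset.sum_le_sum fun t _ => ?_
      rw [mul_comm (b^2)]
      refine mul_le_mul_of_nonneg_left ?_ (hpp t)
      calc ζ t ^ 2 = |ζ t| ^ 2 := (sq_abs _).symm
        _ ≤ b ^ 2 := pow_le_pow_left₀ (abs_nonneg _) (hζ t) 2
    have h2 : ∑ t, pp z0 ζ s t * ζ t = ww z0 ζ s := rfl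
    have h3 : ∑ t, pp z0 ζ s t ≤ 1 := pp_sum_le z0 ζ s
    have h4 : (0:ℝ) ≤ ∑ t, pp z0 ζ s t := Finset.sum_nonneg fun t _ => hpp t
    rw [expand, h2]
    nlinarith [sq_nonneg (ww z0 ζ s), sq_nonneg b]
  have cs := Real.sum_mul_le_sqrt_mul_sqrt Finset.univ
    (fun t => Real.sqrt (pp z0 ζ s t)) (fun t => Real.sqrt (pp z0 ζ s t) * |ζ t - ww z0 ζ s|)
  have lhs_eq : ∑ t, Real.sqrt (pp z0 ζ s t) * (Real.sqrt (pp z0 ζ s t) * |ζ t - ww z0 ζ s|)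
      = ∑ t, |q1 z0 ζ s t| := by
    refine Finset.sum_congr rfl fun t _ => ?_
    rw [← mul_assoc, Real.mul_self_sqrt (hpp t), q1, abs_mul, abs_of_nonneg (hpp t)]
  have r1 : ∑ t, Real.sqrt (pp z0 ζ s t) ^ 2 = ∑ t, pp z0 ζ s t :=
    Finset.sum_congr rfl fun t _ => Real.sq_sqrt (hpp t)
  have r2 : ∑ t, (Real.sqrt (pp z0 ζ s t) * |ζ t - ww z0 ζ s|) ^ 2
      = ∑ t, pp z0 ζ s t * (ζ t - ww z0 ζ s) ^ 2 := by
    refine Finset.sum_congr rfl fun t _ => ?_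
    rw [mul_pow, Real.sq_sqrt (hpp t), sq_abs]
  rw [lhs_eq, r1, r2] at cs
  calc ∑ t, |q1 z0 ζ s t| ≤ Real.sqrt (∑ t, pp z0 ζ s t) *
        Real.sqrt (∑ t, pp z0 ζ s t * (ζ t - ww z0 ζ s) ^ 2) := cs
    _ ≤ Real.sqrt 1 * Real.sqrt (b ^ 2) := by
        refine mul_le_mul (Real.sqrt_le_sqrt (pp_sum_le z0 ζ s)) (Real.sqrt_le_sqrt key)
          (Real.sqrt_nonneg _) (Real.sqrt_nonneg _)
    _ = b := by rw [Real.sqrt_one, one_mul, Real.sqrt_sq hb]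

lemma abs_w1_le (hζ : ∀ t, |ζ t| ≤ b) (hb : 0 ≤ b) (s : ℝ) : |w1 z0 ζ s| ≤ b ^ 2 := by
  calc |w1 z0 ζ s| ≤ ∑ t, |q1 z0 ζ s t * ζ t| := Finset.abs_sum_le_sum_abs _ _
    _ ≤ ∑ t, |q1 z0 ζ s t| * b := by
        refine Finset.sum_le_sum fun t _ => ?_
        rw [abs_mul]
        exact mul_le_mul_of_nonneg_left (hζ t) (abs_nonneg _)
    _ = (∑ t, |q1 z0 ζ s t|) * b := by rw [Finset.sum_mul]
    _ ≤ b * b := mul_le_mul_of_nonneg_right (sum_q1_abs_le z0 ζ hζ hb s) hb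
    _ = b ^ 2 := (sq b).symm

lemma sum_q2_abs_le (hζ : ∀ t, |ζ t| ≤ b) (hb : 0 ≤ b) (s : ℝ) :
    ∑ t, |q2 z0 ζ s t| ≤ 3 * b ^ 2 := by
  have hpp : ∀ t, (0:ℝ) ≤ pp z0 ζ s t := fun t => le_of_lt (pp_pos z0 ζ s t)
  have hy : ∀ t, |ζ t - ww z0 ζ s| ≤ 2 * b := fun t => by
    have := abs_ww_le z0 ζ hζ hb s
    calc |ζ t - ww z0 ζ s| ≤ |ζ t| + |ww z0 ζ s| := abs_sub _ _
      _ ≤ b + b := add_le_add (hζ t) this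
      _ = 2 * b := by ring
  have hterm : ∀ t, |q2 z0 ζ s t| ≤ |q1 z0 ζ s t| * (2 * b) + pp z0 ζ s t * b ^ 2 := by
    intro t
    rw [q2]
    calc |q1 z0 ζ s t * (ζ t - ww z0 ζ s) - pp z0 ζ s t * w1 z0 ζ s|
        ≤ |q1 z0 ζ s t * (ζ t - ww z0 ζ s)| + |pp z0 ζ s t * w1 z0 ζ s| := abs_sub _ _
      _ ≤ |q1 z0 ζ s t| * (2 * b) + pp z0 ζ s t * b ^ 2 := by
          rw [abs_mul, abs_mul, abs_of_nonneg (hpp t)]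
          exact add_le_add (mul_le_mul_of_nonneg_left (hy t) (abs_nonneg _))
            (mul_le_mul_of_nonneg_left (abs_w1_le z0 ζ hζ hb s) (hpp t))
  calc ∑ t, |q2 z0 ζ s t| ≤ ∑ t, (|q1 z0 ζ s t| * (2 * b) + pp z0 ζ s t * b ^ 2) :=
        Finset.sum_le_sum fun t _ => hterm t
    _ = (∑ t, |q1 z0 ζ s t|) * (2 * b) + (∑ t, pp z0 ζ s t) * b ^ 2 := by
        simp only [Finset.sum_mul, ← Finset.sum_add_distrib]
    _ ≤ b * (2 * b) + 1 * b ^ 2 := by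
        refine add_le_add (mul_le_mul_of_nonneg_right (sum_q1_abs_le z0 ζ hζ hb s) (by positivity))
          (mul_le_mul_of_nonneg_right (pp_sum_le z0 ζ s) (by positivity))
    _ = 3 * b ^ 2 := by ring



lemma l2_comb_le (r : Fin T → ℝ) (hX : ∀ t, l2 (fun k => X k t) ≤ 1) :
    l2 (fun k => ∑ t, X k t * r t) ≤ ∑ t, |r t| := by
  have he : (fun k => ∑ t, X k t * r t) = fun k => ∑ t, r t * X k t :=
    funext fun k => Finset.sum_congr rfl fun t _ => mul_comm _ _
  rw [he]
  refine (l2_sum_le Finset.univ (fun t k => r t * X k t)).trans ?_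
  refine Finset.sum_le_sum fun t _ => ?_
  rw [l2_smul]
  calc |r t| * l2 (fun k => X k t) ≤ |r t| * 1 :=
        mul_le_mul_of_nonneg_left (hX t) (abs_nonneg _)
    _ = |r t| := mul_one _

variable (hX : ∀ t, l2 (fun k => X k t) ≤ 1) (hζ : ∀ t, |ζ t| ≤ b) (hb : 0 ≤ b)

include hX in
lemma l2_AA_le (s : ℝ) : l2 (AA X z0 ζ s) ≤ 1 := by
  refine (l2_comb_le X (pp z0 ζ s) hX).trans ?_
  calc ∑ t, |pp z0 ζ s t| = ∑ t, pp z0 ζ s t :=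
        Finset.sum_congr rfl fun t _ => abs_of_pos (pp_pos z0 ζ s t)
    _ ≤ 1 := pp_sum_le z0 ζ s

include hX hζ hb in
lemma l2_BB_le (s : ℝ) : l2 (BB X z0 ζ s) ≤ b :=
  (l2_comb_le X (q1 z0 ζ s) hX).trans (sum_q1_abs_le z0 ζ hζ hb s)

include hX hζ hb in
lemma l2_CC_le (s : ℝ) : l2 (CC X z0 ζ s) ≤ 3 * b ^ 2 :=
  (l2_comb_le X (q2 z0 ζ s) hX).trans (sum_q2_abs_le z0 ζ hζ hb s)

variable {B : ℝ} (U0 ΔU : Fin d → ℝ) (hB : l2 U0 + l2 ΔU ≤ B)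

include hB in
lemma l2_Uu_le {s : ℝ} (hs : s ∈ Set.Icc (0:ℝ) 1) : l2 (Uu U0 ΔU s) ≤ B := by
  have h1 : l2 (Uu U0 ΔU s) ≤ l2 U0 + l2 (fun k => s * ΔU k) := l2_add_le _ _
  rw [l2_smul] at h1
  have : |s| * l2 ΔU ≤ 1 * l2 ΔU := by
    refine mul_le_mul_of_nonneg_right ?_ (l2_nonneg _)
    rw [abs_of_nonneg hs.1]; exact hs.2
  rw [one_mul] at this
  linarith

include hX hζ hb hB in
lemma abs_gg1_le {s : ℝ} (hs : s ∈ Set.Icc (0:ℝ) 1) :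
    |gg1 X z0 ζ U0 ΔU s| ≤ l2 ΔU + B * b := by
  have h1 : |dot ΔU (AA X z0 ζ s)| ≤ l2 ΔU * 1 := by
    refine (abs_dot_le _ _).trans (mul_le_mul_of_nonneg_left (l2_AA_le X z0 ζ hX s) (l2_nonneg _))
  have h2 : |dot (Uu U0 ΔU s) (BB X z0 ζ s)| ≤ B * b := by
    refine (abs_dot_le _ _).trans ?_
    have hBnn : (0:ℝ) ≤ B := le_trans (add_nonneg (l2_nonneg _) (l2_nonneg _)) hB
    exact mul_le_mul (l2_Uu_le U0 ΔU hB hs) (l2_BB_le X z0 ζ hX hζ hb s) (l2_nonneg _) hBnn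
  calc |gg1 X z0 ζ U0 ΔU s| ≤ |dot ΔU (AA X z0 ζ s)| + |dot (Uu U0 ΔU s) (BB X z0 ζ s)| :=
        abs_add_le _ _
    _ ≤ l2 ΔU * 1 + B * b := add_le_add h1 h2
    _ = l2 ΔU + B * b := by ring

include hX hζ hb hB in
lemma abs_gg2_le {s : ℝ} (hs : s ∈ Set.Icc (0:ℝ) 1) :
    |gg2 X z0 ζ U0 ΔU s| ≤ 2 * l2 ΔU * b + 3 * B * b ^ 2 := by
  have h1 : |dot ΔU (BB X z0 ζ s)| ≤ l2 ΔU * b :=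
    (abs_dot_le _ _).trans (mul_le_mul_of_nonneg_left (l2_BB_le X z0 ζ hX hζ hb s) (l2_nonneg _))
  have h2 : |dot (Uu U0 ΔU s) (CC X z0 ζ s)| ≤ B * (3 * b ^ 2) := by
    refine (abs_dot_le _ _).trans ?_
    have hBnn : (0:ℝ) ≤ B := le_trans (add_nonneg (l2_nonneg _) (l2_nonneg _)) hB
    exact mul_le_mul (l2_Uu_le U0 ΔU hB hs) (l2_CC_le X z0 ζ hX hζ hb s) (l2_nonneg _) hBnn
  calc |gg2 X z0 ζ U0 ΔU s| ≤ |2 * dot ΔU (BB X z0 ζ s)| + |dot (Uu U0 ΔU s) (CC X z0 ζ s)| :=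
        abs_add_le _ _
    _ ≤ 2 * (l2 ΔU * b) + B * (3 * b ^ 2) := by
        rw [abs_mul, abs_two]
        exact add_le_add (mul_le_mul_of_nonneg_left h1 (by norm_num)) h2
    _ = 2 * l2 ΔU * b + 3 * B * b ^ 2 := by ring



variable (σf : ℝ → ℝ) {σ₁ σ₂ : ℝ}

include hX hζ hb hB in
theorem key_est (hsm : ContDiff ℝ 2 σf)
    (hσ1 : ∀ x, |deriv σf x| ≤ σ₁) (hσ2 : ∀ x, |deriv (deriv σf) x| ≤ σ₂) :
    |σf (gg X z0 ζ U0 ΔU 1) - σf (gg X z0 ζ U0 ΔU 0)| ≤ σ₁ * (l2 ΔU + B * b) ∧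
    |σf (gg X z0 ζ U0 ΔU 1) - σf (gg X z0 ζ U0 ΔU 0)
        - deriv σf (gg X z0 ζ U0 ΔU 0) * gg1 X z0 ζ U0 ΔU 0|
      ≤ σ₂ * (l2 ΔU + B * b) ^ 2 + σ₁ * (2 * l2 ΔU * b + 3 * B * b ^ 2) := by
  have hσ1nn : 0 ≤ σ₁ := le_trans (abs_nonneg _) (hσ1 0)
  have hσ2nn : 0 ≤ σ₂ := le_trans (abs_nonneg _) (hσ2 0)
  have hBnn : (0:ℝ) ≤ B := le_trans (add_nonneg (l2_nonneg _) (l2_nonneg _)) hB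
  have hd1 : Differentiable ℝ σf := hsm.differentiable (by norm_num)
  have hd2 : Differentiable ℝ (deriv σf) := by
    have h2 : ContDiff ℝ ((1:WithTop ℕ∞) + 1) σf := by
      have he : ((1:WithTop ℕ∞) + 1) = 2 := by norm_num
      rw [he]; exact hsm
    have := (contDiff_succ_iff_deriv.mp h2).2.2
    exact this.differentiable (by norm_num)
  set a := l2 ΔU with ha
  set G := fun s => gg X z0 ζ U0 ΔU s with hG
  set G1 := fun s => gg1 X z0 ζ U0 ΔU s with hG1
  set G2 := fun s => gg2 X z0 ζ U0 ΔU s with hG2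
  have hgd : ∀ s, HasDerivAt G (G1 s) s := fun s => hasDerivAt_gg X z0 ζ U0 ΔU s
  have hgd1 : ∀ s, HasDerivAt G1 (G2 s) s := fun s => hasDerivAt_gg1 X z0 ζ U0 ΔU s
  have hF : ∀ s, HasDerivAt (fun s => σf (G s)) (deriv σf (G s) * G1 s) s := fun s =>
    ((hd1 (G s)).hasDerivAt).comp s (hgd s)
  set F1 := fun s => deriv σf (G s) * G1 s with hF1def
  have hF1 : ∀ s, HasDerivAt F1
      (deriv (deriv σf) (G s) * G1 s ^ 2 + deriv σf (G s) * G2 s) s := by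
    intro s
    have hc : HasDerivAt (fun s => deriv σf (G s)) (deriv (deriv σf) (G s) * G1 s) s :=
      ((hd2 (G s)).hasDerivAt).comp s (hgd s)
    have := hc.fun_mul (hgd1 s)
    refine this.congr_deriv ?_
    ring
  have hg1b : ∀ s ∈ Set.Icc (0:ℝ) 1, |G1 s| ≤ a + B * b := fun s hs =>
    abs_gg1_le X z0 ζ hX hζ hb U0 ΔU hB hs
  have hg2b : ∀ s ∈ Set.Icc (0:ℝ) 1, |G2 s| ≤ 2 * a * b + 3 * B * b ^ 2 := fun s hs =>
    abs_gg2_le X z0 ζ hX hζ hb U0 ΔU hB hs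
  have hF1b : ∀ s ∈ Set.Icc (0:ℝ) 1, ‖F1 s‖ ≤ σ₁ * (a + B * b) := by
    intro s hs
    rw [Real.norm_eq_abs, hF1def, abs_mul]
    exact mul_le_mul (hσ1 _) (hg1b s hs) (abs_nonneg _) hσ1nn
  set K := σ₂ * (a + B * b) ^ 2 + σ₁ * (2 * a * b + 3 * B * b ^ 2) with hK
  have habBnn : 0 ≤ a + B * b := add_nonneg (l2_nonneg _) (mul_nonneg hBnn hb)
  have hF2b : ∀ s ∈ Set.Icc (0:ℝ) 1,
      ‖deriv (deriv σf) (G s) * G1 s ^ 2 + deriv σf (G s) * G2 s‖ ≤ K := by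
    intro s hs
    rw [Real.norm_eq_abs]
    have h1 : |deriv (deriv σf) (G s) * G1 s ^ 2| ≤ σ₂ * (a + B * b) ^ 2 := by
      rw [abs_mul, abs_pow]
      exact mul_le_mul (hσ2 _) (pow_le_pow_left₀ (abs_nonneg _) (hg1b s hs) 2)
        (by positivity) hσ2nn
    have h2 : |deriv σf (G s) * G2 s| ≤ σ₁ * (2 * a * b + 3 * B * b ^ 2) := by
      rw [abs_mul]
      exact mul_le_mul (hσ1 _) (hg2b s hs) (abs_nonneg _) hσ1nn
    calc |deriv (deriv σf) (G s) * G1 s ^ 2 + deriv σf (G s) * G2 s|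
        ≤ |deriv (deriv σf) (G s) * G1 s ^ 2| + |deriv σf (G s) * G2 s| := abs_add_le _ _
      _ ≤ K := by rw [hK]; exact add_le_add h1 h2
  have h0mem : (0:ℝ) ∈ Set.Icc (0:ℝ) 1 := Set.mem_Icc.mpr ⟨le_refl 0, zero_le_one⟩
  have h1mem : (1:ℝ) ∈ Set.Icc (0:ℝ) 1 := Set.mem_Icc.mpr ⟨zero_le_one, le_refl 1⟩
  constructor
  · have := Convex.norm_image_sub_le_of_norm_hasDerivWithin_le
      (f := fun s => σf (G s)) (f' := F1) (s := Set.Icc (0:ℝ) 1)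
      (fun x _ => (hF x).hasDerivWithinAt) hF1b (convex_Icc 0 1) h0mem h1mem
    simpa using this
  · -- Lipschitz bound on F1
    have hLip : ∀ y ∈ Set.Icc (0:ℝ) 1, ‖F1 y - F1 0‖ ≤ K := by
      intro y hy
      have := Convex.norm_image_sub_le_of_norm_hasDerivWithin_le
        (f := F1) (f' := fun s => deriv (deriv σf) (G s) * G1 s ^ 2 + deriv σf (G s) * G2 s)
        (s := Set.Icc (0:ℝ) 1)
        (fun x _ => (hF1 x).hasDerivWithinAt) hF2b (convex_Icc 0 1) h0mem hy
      have hKnn : 0 ≤ K := by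
        rw [hK]
        have h1 : (0:ℝ) ≤ (a + B * b) ^ 2 := sq_nonneg _
        have h2 : (0:ℝ) ≤ 2 * a * b + 3 * B * b ^ 2 := by
          have := l2_nonneg ΔU
          have := sq_nonneg b
          positivity
        positivity
      calc ‖F1 y - F1 0‖ ≤ K * ‖y - 0‖ := this
        _ ≤ K * 1 := by
            refine mul_le_mul_of_nonneg_left ?_ hKnn
            rw [sub_zero, Real.norm_eq_abs, abs_of_nonneg hy.1]
            exact hy.2
        _ = K := mul_one K
    have hGd : ∀ s, HasDerivAt (fun s => σf (G s) - s * F1 0) (F1 s - F1 0) s := fun s =>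
      (hF s).sub (hasDerivAt_mul_const (F1 0))
    have := Convex.norm_image_sub_le_of_norm_hasDerivWithin_le
      (f := fun s => σf (G s) - s * F1 0) (f' := fun s => F1 s - F1 0)
      (s := Set.Icc (0:ℝ) 1)
      (fun x _ => (hGd x).hasDerivWithinAt) (fun x hx => hLip x hx) (convex_Icc 0 1) h0mem h1mem
    have heq : σf (G 1) - 1 * F1 0 - (σf (G 0) - 0 * F1 0)
        = σf (G 1) - σf (G 0) - deriv σf (G 0) * G1 0 := by
      rw [hF1def]; ring
    rw [Real.norm_eq_abs, heq] at this
    calc |σf (G 1) - σf (G 0) - deriv σf (G 0) * G1 0| ≤ K * ‖(1:ℝ) - 0‖ := this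
      _ = K := by simp
      _ = σ₂ * (a + B * b) ^ 2 + σ₁ * (2 * a * b + 3 * B * b ^ 2) := hK.symm


section Bridge
variable {d T : ℕ}

lemma pp_zero (z0 ζ : Fin T → ℝ) : pp z0 ζ 0 = softmax z0 := by
  funext t
  simp [pp, Ee, Ss, softmax]

lemma q1_zero_eq (z0 ζ : Fin T → ℝ) (t : Fin T) :
    q1 z0 ζ 0 t = ∑ s, softmaxJac z0 s t * ζ s := by
  have h1 : ∑ s, softmaxJac z0 s t * ζ s
      = ∑ s, ((if s = t then softmax z0 s * ζ s else 0) - softmax z0 s * softmax z0 t * ζ s) := by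
    refine Finset.sum_congr rfl fun s _ => ?_
    simp only [softmaxJac]
    by_cases h : s = t <;> simp [h] <;> ring
  rw [h1, Finset.sum_sub_distrib, Finset.sum_ite_eq' Finset.univ t (fun s => softmax z0 s * ζ s)]
  have h2 : ∑ s, softmax z0 s * softmax z0 t * ζ s
      = (∑ s, softmax z0 s * ζ s) * softmax z0 t := by
    rw [Finset.sum_mul]
    exact Finset.sum_congr rfl fun s _ => by ring
  rw [h2]
  simp only [q1, ww, pp_zero, Finset.mem_univ, if_pos]
  ring

lemma grad_eq (X : Fin d → Fin T → ℝ) (q U0 : Fin d → ℝ) (W0 ΔW : Fin d → Fin d → ℝ) :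
    dot U0 (BB X (score X W0 q) (score X ΔW q) 0)
      = frobDot (fun k l => (∑ j, Mmat X W0 q k j * U0 j) * q l) ΔW := by
  set z0 := score X W0 q with hz0
  set ζ := score X ΔW q with hζdef
  set J := softmaxJac z0 with hJ
  set DQ : Fin d → ℝ := fun k => ∑ l, ΔW k l * q l with hDQ
  set V : Fin T → ℝ := fun t => ∑ j, U0 j * X j t with hV
  have hζ_eq : ∀ s, ζ s = ∑ k, X k s * DQ k := fun s => rfl
  -- LHS stages
  have L1 : dot U0 (BB X z0 ζ 0) = ∑ t, V t * q1 z0 ζ 0 t := by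
    simp only [dot, BB, Finset.mul_sum, hV]
    rw [Finset.sum_comm]
    refine Finset.sum_congr rfl fun t _ => ?_
    rw [Finset.sum_mul]
    exact Finset.sum_congr rfl fun k _ => by ring
  have L2 : ∑ t, V t * q1 z0 ζ 0 t = ∑ s, (∑ t, V t * J s t) * ζ s := by
    simp only [q1_zero_eq, Finset.mul_sum]
    rw [Finset.sum_comm]
    refine Finset.sum_congr rfl fun s _ => ?_
    rw [Finset.sum_mul]
    exact Finset.sum_congr rfl fun t _ => by ring
  have L3 : ∑ s, (∑ t, V t * J s t) * ζ s = ∑ k, (∑ s, (∑ t, V t * J s t) * X k s) * DQ k := by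
    simp only [hζ_eq, Finset.mul_sum]
    rw [Finset.sum_comm]
    refine Finset.sum_congr rfl fun k _ => ?_
    rw [Finset.sum_mul]
    exact Finset.sum_congr rfl fun s _ => by ring
  -- RHS stages
  have R1 : frobDot (fun k l => (∑ j, Mmat X W0 q k j * U0 j) * q l) ΔW
      = ∑ k, (∑ j, Mmat X W0 q k j * U0 j) * DQ k := by
    simp only [frobDot, hDQ, Finset.mul_sum]
    exact Finset.sum_congr rfl fun k _ => Finset.sum_congr rfl fun l _ => by ring
  have R2 : ∀ k, ∑ j, Mmat X W0 q k j * U0 j = ∑ s, (∑ t, V t * J s t) * X k s := by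
    intro k
    simp only [Mmat, hV, ← hz0, ← hJ, Finset.sum_mul, Finset.mul_sum]
    rw [Finset.sum_comm]
    refine Finset.sum_congr rfl fun s _ => ?_
    rw [Finset.sum_comm]
    refine Finset.sum_congr rfl fun t _ => ?_
    exact Finset.sum_congr rfl fun j _ => by ring
  rw [L1, L2, L3, R1]
  exact Finset.sum_congr rfl fun k _ => by rw [R2 k]


lemma score_add (X : Fin d → Fin T → ℝ) (q : Fin d → ℝ) (W0 ΔW : Fin d → Fin d → ℝ) :
    score X (fun k l => W0 k l + ΔW k l) q = fun t => score X W0 q t + 1 * score X ΔW q t := by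
  funext t
  simp only [score, add_mul, mul_add, Finset.sum_add_distrib, Finset.mul_sum, one_mul]

lemma pp_one (z0 ζ : Fin T → ℝ) : pp z0 ζ 1 = softmax (fun t => z0 t + 1 * ζ t) := by
  funext t
  simp [pp, Ee, Ss, softmax]

lemma head_bound {B : ℝ} (σf : ℝ → ℝ) {σ₁ σ₂ : ℝ} (hsm : ContDiff ℝ 2 σf)
    (hσ1 : ∀ x, |deriv σf x| ≤ σ₁) (hσ2 : ∀ x, |deriv (deriv σf) x| ≤ σ₂)
    (X : Fin d → Fin T → ℝ) (q : Fin d → ℝ)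
    (hX : ∀ t, l2 (fun k => X k t) ≤ 1) (hq : l2 q ≤ 1)
    (U0 ΔU : Fin d → ℝ) (W0 ΔW : Fin d → Fin d → ℝ)
    (hB : l2 U0 + l2 ΔU ≤ B) :
    |hHead σf X q (fun k => U0 k + ΔU k) (fun k l => W0 k l + ΔW k l) - hHead σf X q U0 W0|
      ≤ σ₁ * (l2 ΔU + B * frob ΔW) ∧
    |hHead σf X q (fun k => U0 k + ΔU k) (fun k l => W0 k l + ΔW k l) - hHead σf X q U0 W0
        - deriv σf (dot U0 (attn X W0 q)) *
            (dot (attn X W0 q) ΔU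
              + frobDot (fun k l => (∑ j, Mmat X W0 q k j * U0 j) * q l) ΔW)|
      ≤ σ₂ * (l2 ΔU + B * frob ΔW) ^ 2
        + σ₁ * (2 * l2 ΔU * frob ΔW + 3 * B * frob ΔW ^ 2) := by
  set z0 := score X W0 q with hz0
  set ζ := score X ΔW q with hζdef
  have hζb : ∀ t, |ζ t| ≤ frob ΔW := by
    intro t
    have h1 : |dot (fun i => X i t) (fun i => ∑ j, ΔW i j * q j)|
        ≤ l2 (fun i => X i t) * l2 (fun i => ∑ j, ΔW i j * q j) := abs_dot_le _ _
    have h2 : l2 (fun i => ∑ j, ΔW i j * q j) ≤ frob ΔW * l2 q := l2_matvec_le _ _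
    have h3 : frob ΔW * l2 q ≤ frob ΔW * 1 :=
      mul_le_mul_of_nonneg_left hq (frob_nonneg _)
    have h4 : l2 (fun i => X i t) * l2 (fun i => ∑ j, ΔW i j * q j)
        ≤ 1 * (frob ΔW * 1) := by
      refine mul_le_mul (hX t) (h2.trans h3) (l2_nonneg _) zero_le_one
    calc |ζ t| = |dot (fun i => X i t) (fun i => ∑ j, ΔW i j * q j)| := rfl
      _ ≤ 1 * (frob ΔW * 1) := h1.trans h4
      _ = frob ΔW := by ring
  have hb : 0 ≤ frob ΔW := frob_nonneg _
  -- function equalities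
  have hA1 : attn X (fun k l => W0 k l + ΔW k l) q = AA X z0 ζ 1 := by
    funext k
    simp only [attn, AA, score_add X q W0 ΔW, pp_one]
    rfl
  have hA0 : attn X W0 q = AA X z0 ζ 0 := by
    funext k
    simp only [attn, AA, pp_zero]
    rfl
  have hU1 : (fun k => U0 k + ΔU k) = Uu U0 ΔU 1 := by
    funext k; simp [Uu]
  have hU0 : U0 = Uu U0 ΔU 0 := by
    funext k; simp [Uu]
  have hh1 : hHead σf X q (fun k => U0 k + ΔU k) (fun k l => W0 k l + ΔW k l)
      = σf (gg X z0 ζ U0 ΔU 1) := by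
    rw [hHead, gg, hA1, hU1]
  have hh0 : hHead σf X q U0 W0 = σf (gg X z0 ζ U0 ΔU 0) := by
    rw [hHead, gg, hA0]
    nth_rewrite 1 [hU0]
    rfl
  have hdot0 : dot U0 (attn X W0 q) = gg X z0 ζ U0 ΔU 0 := by
    rw [gg, hA0]
    nth_rewrite 1 [hU0]
    rfl
  have hgrad : dot (attn X W0 q) ΔU
      + frobDot (fun k l => (∑ j, Mmat X W0 q k j * U0 j) * q l) ΔW
      = gg1 X z0 ζ U0 ΔU 0 := by
    rw [gg1, ← grad_eq X q U0 W0 ΔW, hA0]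
    have hc : dot (AA X z0 ζ 0) ΔU = dot ΔU (AA X z0 ζ 0) := by
      simp only [dot]
      exact Finset.sum_congr rfl fun k _ => mul_comm _ _
    rw [hc, ← hζdef]
    congr 1
    nth_rewrite 1 [hU0]
    rfl
  have key := key_est X z0 ζ hX hζb hb U0 ΔU hB σf hsm hσ1 hσ2
  rw [hh1, hh0, hdot0, hgrad]
  exact key

end Bridge
end TF

set_option maxHeartbeats 2000000 in
/-- uniform linearization error bound for the shallow Transformer in the
neighborhood `Ω_ρ` of the initialization. -/
theorem linearization_error_bound {m d T : ℕ} (hm : 0 < m)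
    (σf : ℝ → ℝ) (σ₀ σ₁ σ₂ : ℝ) (hsm : ContDiff ℝ 2 σf)
    (hσ0 : ∀ x, |σf x| ≤ σ₀) (hσ1 : ∀ x, |deriv σf x| ≤ σ₁)
    (hσ2 : ∀ x, |deriv (deriv σf) x| ≤ σ₂)
    (qmap : (Fin d → Fin T → ℝ) → (Fin d → ℝ))
    (hq : ∀ X, l2 (qmap X) ≤ 1)
    (c0 : Fin m → ℝ) (U0 : Fin m → Fin d → ℝ) (W0 : Fin m → Fin d → Fin d → ℝ)
    (hc0 : ∀ i, |c0 i| = 1)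
    (hf0 : ∀ X : Fin d → Fin T → ℝ, (∀ t, l2 (fun k => X k t) ≤ 1) →
      fModel σf X (qmap X) c0 U0 W0 = 0)
    (ρc ρu ρw B_U : ℝ) (hρc : 0 < ρc) (hρu : 0 < ρu) (hρw : 0 < ρw)
    (hBU : ∀ i, l2 (U0 i) + ρu / Real.sqrt m ≤ B_U) :
    ∀ (c : Fin m → ℝ) (U : Fin m → Fin d → ℝ) (W : Fin m → Fin d → Fin d → ℝ),
      -- φ ∈ Ω_ρ
      (∀ i, |c i - c0 i| ≤ ρc / Real.sqrt m ∧
            l2 (fun k => U i k - U0 i k) ≤ ρu / Real.sqrt m ∧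
            frob (fun k l => W i k l - W0 i k l) ≤ ρw / Real.sqrt m) →
      -- X ∈ 𝒳
      ∀ X : Fin d → Fin T → ℝ, (∀ t, l2 (fun k => X k t) ≤ 1) →
      |fModel σf X (qmap X) c U W - flin σf X (qmap X) c0 U0 W0 c U W| ≤
        (Real.sqrt m)⁻¹ *
          ((σ₁ * Real.sqrt (1 + B_U ^ 2)) * ρc * Real.sqrt (ρu ^ 2 + ρw ^ 2) +
           (σ₂ * (1 + B_U ^ 2) + 8 * σ₁ * Real.sqrt (1 + B_U ^ 2)) * (ρu ^ 2 + ρw ^ 2)) := by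
  intro c U W hΩ X hXmem
  have hq' : l2 (qmap X) ≤ 1 := hq X
  set q : Fin d → ℝ := qmap X with hqdef
  have hmR : (0:ℝ) < (m:ℝ) := Nat.cast_pos.mpr hm
  have hsqm : (0:ℝ) < Real.sqrt m := Real.sqrt_pos.mpr hmR
  set P : ℝ := ρu ^ 2 + ρw ^ 2 with hP
  set r : ℝ := Real.sqrt P with hr
  set s1 : ℝ := Real.sqrt (1 + B_U ^ 2) with hs1
  set Q : ℝ := (σ₁ * s1) * ρc * r + (σ₂ * (1 + B_U ^ 2) + 8 * σ₁ * s1) * P with hQ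
  have hσ1nn : 0 ≤ σ₁ := le_trans (abs_nonneg _) (hσ1 0)
  have hσ2nn : 0 ≤ σ₂ := le_trans (abs_nonneg _) (hσ2 0)
  have hBpos : 0 < B_U := by
    have h0 := hBU ⟨0, hm⟩
    have := l2_nonneg (U0 ⟨0, hm⟩)
    have : 0 < ρu / Real.sqrt m := div_pos hρu hsqm
    linarith
  have hs1nn0 : 0 ≤ s1 := by rw [hs1]; exact Real.sqrt_nonneg _
  have hs1B : B_U ≤ s1 := by
    rw [hs1]
    have : B_U = Real.sqrt (B_U ^ 2) := (Real.sqrt_sq hBpos.le).symm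
    rw [this]
    exact Real.sqrt_le_sqrt (by nlinarith)
  have hs11 : 1 ≤ s1 := by
    have h1 : s1 ^ 2 = 1 + B_U ^ 2 := by
      rw [hs1]; exact Real.sq_sqrt (by positivity)
    nlinarith [sq_nonneg B_U, hs1nn0]
  have hs1nn : 0 ≤ s1 := hs1nn0
  -- per-head bound
  have head : ∀ i, |c i * hHead σf X q (U i) (W i)
      - (hHead σf X q (U0 i) (W0 i) * (c i - c0 i)
        + c0 i * deriv σf (dot (U0 i) (attn X (W0 i) q)) *
            dot (attn X (W0 i) q) (fun k => U i k - U0 i k)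
        + c0 i * deriv σf (dot (U0 i) (attn X (W0 i) q)) *
            frobDot (fun k l => (∑ j, Mmat X (W0 i) q k j * U0 i j) * q l)
              (fun k l => W i k l - W0 i k l))
      - c0 i * hHead σf X q (U0 i) (W0 i)| ≤ Q / m := by
    intro i
    obtain ⟨hci, hUi, hWi⟩ := hΩ i
    set ΔU : Fin d → ℝ := fun k => U i k - U0 i k with hΔU
    set ΔW : Fin d → Fin d → ℝ := fun k l => W i k l - W0 i k l with hΔW
    have hBi : l2 (U0 i) + l2 ΔU ≤ B_U := by
      have := hBU i
      linarith
    have hb := TF.head_bound σf hsm hσ1 hσ2 X q hXmem hq' (U0 i) ΔU (W0 i) ΔW hBi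
    have hUre : (fun k => U0 i k + ΔU k) = U i := funext fun k => by simp [hΔU]
    have hWre : (fun k l => W0 i k l + ΔW k l) = W i := by
      funext k l; simp [hΔW]
    rw [hUre, hWre] at hb
    obtain ⟨P1, P2⟩ := hb
    set a : ℝ := l2 ΔU with ha
    set b : ℝ := frob ΔW with hbb
    have hann : 0 ≤ a := l2_nonneg _
    have hbnn : 0 ≤ b := frob_nonneg _
    set h1 : ℝ := hHead σf X q (U i) (W i)
    set h0 : ℝ := hHead σf X q (U0 i) (W0 i)
    set D : ℝ := deriv σf (dot (U0 i) (attn X (W0 i) q))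
    set dt : ℝ := dot (attn X (W0 i) q) ΔU
    set ft : ℝ := frobDot (fun k l => (∑ j, Mmat X (W0 i) q k j * U0 i j) * q l) ΔW
    have hsplit : c i * h1 - (h0 * (c i - c0 i) + c0 i * D * dt + c0 i * D * ft) - c0 i * h0
        = (c i - c0 i) * (h1 - h0) + c0 i * (h1 - h0 - D * (dt + ft)) := by ring
    rw [hsplit]
    have habs : |(c i - c0 i) * (h1 - h0) + c0 i * (h1 - h0 - D * (dt + ft))|
        ≤ |c i - c0 i| * |h1 - h0| + |c0 i| * |h1 - h0 - D * (dt + ft)| := by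
      calc _ ≤ |(c i - c0 i) * (h1 - h0)| + |c0 i * (h1 - h0 - D * (dt + ft))| := abs_add_le _ _
        _ = _ := by rw [abs_mul, abs_mul]
    refine habs.trans ?_
    rw [hc0 i, one_mul]
    -- numeric estimates
    have hab2 : a ^ 2 + b ^ 2 ≤ P / m := by
      have h1' : a ^ 2 ≤ (ρu / Real.sqrt m) ^ 2 := pow_le_pow_left₀ hann hUi 2
      have h2' : b ^ 2 ≤ (ρw / Real.sqrt m) ^ 2 := pow_le_pow_left₀ hbnn hWi 2
      have h3' : (ρu / Real.sqrt m) ^ 2 + (ρw / Real.sqrt m) ^ 2 = P / m := by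
        rw [div_pow, div_pow, Real.sq_sqrt hmR.le, hP]
        ring
      linarith
    have hPnn : (0:ℝ) ≤ P := by rw [hP]; positivity
    have hsq1 : (a + B_U * b) ^ 2 ≤ (1 + B_U ^ 2) * (a ^ 2 + b ^ 2) := by
      nlinarith [sq_nonneg (B_U * a - b)]
    have habB : a + B_U * b ≤ s1 * (r / Real.sqrt m) := by
      have hrhsnn : 0 ≤ s1 * (r / Real.sqrt m) := by
        have : (0:ℝ) ≤ r := Real.sqrt_nonneg _
        positivity
      have hsq2 : (a + B_U * b) ^ 2 ≤ (s1 * (r / Real.sqrt m)) ^ 2 := by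
        have : (s1 * (r / Real.sqrt m)) ^ 2 = (1 + B_U ^ 2) * (P / m) := by
          rw [mul_pow, div_pow, hs1, hr, Real.sq_sqrt (by nlinarith : (0:ℝ) ≤ 1 + B_U ^ 2),
            Real.sq_sqrt hPnn, Real.sq_sqrt hmR.le]
        rw [this]
        calc (a + B_U * b) ^ 2 ≤ (1 + B_U ^ 2) * (a ^ 2 + b ^ 2) := hsq1
          _ ≤ (1 + B_U ^ 2) * (P / m) := by nlinarith
      have h1' : a + B_U * b = Real.sqrt ((a + B_U * b) ^ 2) := by
        rw [Real.sqrt_sq (by positivity)]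
      rw [h1', show s1 * (r / Real.sqrt m) = Real.sqrt ((s1 * (r / Real.sqrt m)) ^ 2) by
        rw [Real.sqrt_sq hrhsnn]]
      exact Real.sqrt_le_sqrt hsq2
    have term1 : |c i - c0 i| * |h1 - h0| ≤ (σ₁ * s1) * ρc * r / m := by
      have h1' : |c i - c0 i| * |h1 - h0| ≤ (ρc / Real.sqrt m) * (σ₁ * (a + B_U * b)) :=
        mul_le_mul hci P1 (abs_nonneg _) (le_of_lt (div_pos hρc hsqm))
      refine h1'.trans ?_
      have h2' : σ₁ * (a + B_U * b) ≤ σ₁ * (s1 * (r / Real.sqrt m)) :=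
        mul_le_mul_of_nonneg_left habB hσ1nn
      have h3' : (ρc / Real.sqrt m) * (σ₁ * (a + B_U * b))
          ≤ (ρc / Real.sqrt m) * (σ₁ * (s1 * (r / Real.sqrt m))) :=
        mul_le_mul_of_nonneg_left h2' (le_of_lt (div_pos hρc hsqm))
      refine h3'.trans (le_of_eq ?_)
      have hss : Real.sqrt m * Real.sqrt m = (m:ℝ) := Real.mul_self_sqrt hmR.le
      rw [show (ρc / Real.sqrt m) * (σ₁ * (s1 * (r / Real.sqrt m)))
          = (σ₁ * s1) * ρc * r / (Real.sqrt m * Real.sqrt m) by ring, hss]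
    have term2 : |h1 - h0 - D * (dt + ft)|
        ≤ σ₂ * (1 + B_U ^ 2) * (P / m) + σ₁ * (8 * s1 * (P / m)) := by
      refine P2.trans ?_
      have t2a : σ₂ * (a + B_U * b) ^ 2 ≤ σ₂ * (1 + B_U ^ 2) * (P / m) := by
        have := hsq1
        have h' : (a + B_U * b) ^ 2 ≤ (1 + B_U ^ 2) * (P / m) := by nlinarith
        calc σ₂ * (a + B_U * b) ^ 2 ≤ σ₂ * ((1 + B_U ^ 2) * (P / m)) :=
              mul_le_mul_of_nonneg_left h' hσ2nn
          _ = σ₂ * (1 + B_U ^ 2) * (P / m) := by ring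
      have t2b : σ₁ * (2 * a * b + 3 * B_U * b ^ 2) ≤ σ₁ * (8 * s1 * (P / m)) := by
        refine mul_le_mul_of_nonneg_left ?_ hσ1nn
        have h2ab : 2 * a * b ≤ a ^ 2 + b ^ 2 := by nlinarith [sq_nonneg (a - b)]
        have hbB : 3 * B_U * b ^ 2 ≤ 3 * s1 * (a ^ 2 + b ^ 2) := by nlinarith
        have hs1ab : a ^ 2 + b ^ 2 ≤ s1 * (a ^ 2 + b ^ 2) := by nlinarith
        have hPm : a ^ 2 + b ^ 2 ≤ P / m := hab2
        nlinarith
      linarith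
    have hfinal : (σ₁ * s1) * ρc * r / m + (σ₂ * (1 + B_U ^ 2) * (P / m)
        + σ₁ * (8 * s1 * (P / m))) = Q / m := by
      rw [hQ]; ring
    linarith
  -- assemble
  have hsum0 : ∑ i, c0 i * hHead σf X q (U0 i) (W0 i) = 0 := by
    have h0 := hf0 X hXmem
    rw [fModel] at h0
    rcases mul_eq_zero.mp h0 with h | h
    · exact absurd h (by positivity)
    · exact h
  set e : Fin m → ℝ := fun i => c i * hHead σf X q (U i) (W i)
      - (hHead σf X q (U0 i) (W0 i) * (c i - c0 i)
        + c0 i * deriv σf (dot (U0 i) (attn X (W0 i) q)) *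
            dot (attn X (W0 i) q) (fun k => U i k - U0 i k)
        + c0 i * deriv σf (dot (U0 i) (attn X (W0 i) q)) *
            frobDot (fun k l => (∑ j, Mmat X (W0 i) q k j * U0 i j) * q l)
              (fun k l => W i k l - W0 i k l))
      - c0 i * hHead σf X q (U0 i) (W0 i) with he
  have hdecomp : fModel σf X q c U W - flin σf X q c0 U0 W0 c U W
      = (Real.sqrt m)⁻¹ * ∑ i, e i := by
    rw [fModel, flin, he]
    rw [show (∑ i, (c i * hHead σf X q (U i) (W i)
      - (hHead σf X q (U0 i) (W0 i) * (c i - c0 i)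
        + c0 i * deriv σf (dot (U0 i) (attn X (W0 i) q)) *
            dot (attn X (W0 i) q) (fun k => U i k - U0 i k)
        + c0 i * deriv σf (dot (U0 i) (attn X (W0 i) q)) *
            frobDot (fun k l => (∑ j, Mmat X (W0 i) q k j * U0 i j) * q l)
              (fun k l => W i k l - W0 i k l))
      - c0 i * hHead σf X q (U0 i) (W0 i)))
      = (∑ i, c i * hHead σf X q (U i) (W i))
        - (∑ i, (hHead σf X q (U0 i) (W0 i) * (c i - c0 i)
        + c0 i * deriv σf (dot (U0 i) (attn X (W0 i) q)) *
            dot (attn X (W0 i) q) (fun k => U i k - U0 i k)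
        + c0 i * deriv σf (dot (U0 i) (attn X (W0 i) q)) *
            frobDot (fun k l => (∑ j, Mmat X (W0 i) q k j * U0 i j) * q l)
              (fun k l => W i k l - W0 i k l)))
        - ∑ i, c0 i * hHead σf X q (U0 i) (W0 i) from by
      rw [← Finset.sum_sub_distrib, ← Finset.sum_sub_distrib]]
    rw [hsum0]
    ring
  rw [hdecomp]
  have habs : |(Real.sqrt m)⁻¹ * ∑ i, e i| ≤ (Real.sqrt m)⁻¹ * ∑ i, |e i| := by
    rw [abs_mul, abs_of_pos (inv_pos.mpr hsqm)]
    exact mul_le_mul_of_nonneg_left (Finset.abs_sum_le_sum_abs _ _)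
      (le_of_lt (inv_pos.mpr hsqm))
  refine habs.trans ?_
  have hsum : ∑ i, |e i| ≤ (m:ℝ) * (Q / m) := by
    calc ∑ i, |e i| ≤ ∑ _i : Fin m, Q / m := Finset.sum_le_sum fun i _ => head i
      _ = (m:ℝ) * (Q / m) := by
        rw [Finset.sum_const, Finset.card_univ, Fintype.card_fin, nsmul_eq_mul]
  have hQm : (m:ℝ) * (Q / m) = Q := by
    field_simp
  rw [hQm] at hsum
  calc (Real.sqrt m)⁻¹ * ∑ i, |e i| ≤ (Real.sqrt m)⁻¹ * Q :=
        mul_le_mul_of_nonneg_left hsum (le_of_lt (inv_pos.mpr hsqm))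
    _ = _ := by rw [hQ, hs1, hr, hP]
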